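/- arXiv:math/0608038 — 4 statements merged into one kernel-verified Lean document; each statement's English description precedes it below -/
import Mathlib

section
/- Let F be a finite field of odd characteristic and V a finite-dimensional F-vector space with a direct sum decomposition V = V₁ ⊕ V₂ ⊕ V₃ where each Vᵢ is nonzero. If H is a subgroup of SL(V) containing SL(V₁ ⊕ V₂) and SL(V₂ ⊕ V₃) (each embedded as block automorphisms acting as the identity on the complementary summand), then H = SL(V). -/
/-!
In a basis of `V` adapted to `V₁ ⊕ V₂ ⊕ V₃`, `SL(V)` becomes `SL_n(F)`, which is generated by the
elementary transvections `1 + c • E i j` (a diagonal matrix of determinant one is a product of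
`diag(a, a⁻¹)`'s, each a product of six transvections as in `SL₂`). Those with `i` and `j` both
outside the `V₃`-block lie in `SL(V₁ ⊕ V₂)`, those with both outside the `V₁`-block in
`SL(V₂ ⊕ V₃)`. A transvection between the `V₁`- and the `V₃`-block is the commutator
`⁅1 + c • E i m, 1 + E m j⁆` for an index `m` of the nonempty `V₂`-block.
-/

open Matrix

theorem DirectSum.isInternal_submodule_fin_three {R M : Type*} [Ring R] [AddCommGroup M]
    [Module R M] {V₁ V₂ V₃ : Submodule R M}
    (hsup : V₁ ⊔ V₂ ⊔ V₃ = ⊤) (hind₁ : V₁ ⊓ (V₂ ⊔ V₃) = ⊥) (hind₂ : V₂ ⊓ (V₁ ⊔ V₃) = ⊥)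
    (hind₃ : V₃ ⊓ (V₁ ⊔ V₂) = ⊥) : DirectSum.IsInternal ![V₁, V₂, V₃] := by
  refine DirectSum.isInternal_submodule_of_iSupIndep_of_iSup_eq_top ?_ (by simpa using hsup)
  simp only [iSupIndep_fin_three, disjoint_iff]
  simpa [sup_comm V₃ V₁] using ⟨hind₁, hind₂, hind₃⟩

namespace Matrix.SpecialLinearGroup

open scoped commutatorElement

theorem commutator_transvection_transvection {ι R : Type*} [Fintype ι] [DecidableEq ι]
    [CommRing R] {i j k : ι} (hij : i ≠ j) (hjk : j ≠ k) (hik : i ≠ k) (c d : R) :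
    ⁅transvection hij c, transvection hjk d⁆ = transvection hik (c * d) := by
  rw [commutatorElement_def, transvection_inv, transvection_inv]
  refine Subtype.ext ?_
  simp only [coe_mul, transvection_coe]
  noncomm_ring
  simp only [single_mul_single_same, Int.reduceNeg, neg_smul, one_smul, ← single_neg, mul_neg,
    ne_eq, hij.symm, not_false_eq_true, single_mul_single_of_ne, neg_zero, hik.symm, mul_zero,
    hjk.symm, neg_mul, neg_neg, add_zero, zero_add, neg_add_cancel, add_right_inj]
  abel

section Generation

variable {ι F : Type*} [Fintype ι] [DecidableEq ι] [Field F]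

theorem diag2n_eq_transvection_mul {i j : ι} (hij : i ≠ j) (a : F) (ha : a ≠ 0) :
    diag2n hij a ha = transvection hij a * transvection hij.symm (-a⁻¹) * transvection hij a *
      transvection hij (-1) * transvection hij.symm 1 * transvection hij (-1) := by
  refine Subtype.ext ?_
  simp only [diag2n_coe, coe_mul, transvection_coe]
  noncomm_ring
  simp only [smul_single, zsmul_eq_mul, Int.cast_ofNat, Int.reduceNeg, neg_smul, one_smul,
    single_mul_single_same, mul_neg, ne_eq, ha, not_false_eq_true, mul_inv_cancel₀, hij.symm,
    single_mul_single_of_ne, neg_mul, inv_mul_cancel₀, mul_one, smul_neg, smul_zero, neg_neg,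
    mul_zero, hij, add_zero, zero_add]
  ext k l
  simp only [diagonal_apply, one_apply, single_apply, add_apply]
  by_cases hik : i = k <;> by_cases hjk : j = k <;> by_cases hil : i = l <;>
    by_cases hjl : j = l <;> subst_vars <;> simp_all [Ne.symm] <;> ring

theorem eq_top_of_forall_transvection_mem {H : Subgroup (SpecialLinearGroup ι F)}
    (hH : ∀ (i j : ι) (hij : i ≠ j) (c : F), transvection hij c ∈ H) : H = ⊤ := by
  refine eq_top_iff.2 fun M _ => ?_
  rcases subsingleton_or_nontrivial ι with hι | hι
  · convert H.one_mem
    ext k l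
    obtain rfl := Subsingleton.elim k l
    have : Unique ι := uniqueOfSubsingleton k
    obtain rfl := Subsingleton.elim k default
    simpa [det_unique] using M.2
  refine diagonal_transvection_induction' (· ∈ H) M (fun i j hij c hc => ?_) hH
    (fun _ _ => H.mul_mem)
  rw [diag2n_eq_transvection_mul]
  repeat' refine H.mul_mem ?_ ?_
  all_goals apply hH

theorem eq_top_of_transvection_mem_of_cover {S T : Set ι} (hST : S ∪ T = Set.univ)
    (hne : (S ∩ T).Nonempty) {H : Subgroup (SpecialLinearGroup ι F)}
    (hS : ∀ i ∈ S, ∀ j ∈ S, ∀ (hij : i ≠ j) (c : F), transvection hij c ∈ H)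
    (hT : ∀ i ∈ T, ∀ j ∈ T, ∀ (hij : i ≠ j) (c : F), transvection hij c ∈ H) : H = ⊤ := by
  obtain ⟨m, hmS, hmT⟩ := hne
  have hcover : ∀ i, i ∈ S ∨ i ∈ T := fun i => hST.ge (Set.mem_univ i)
  have hmem : ∀ i j (hij : i ≠ j) c, (i ∈ S ∧ j ∈ S) ∨ (i ∈ T ∧ j ∈ T) →
      transvection hij c ∈ H := by
    rintro i j hij c (⟨hi, hj⟩ | ⟨hi, hj⟩)
    exacts [hS i hi j hj hij c, hT i hi j hj hij c]
  have hm_left : ∀ i, (i ∈ S ∧ m ∈ S) ∨ (i ∈ T ∧ m ∈ T) :=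
    fun i => (hcover i).imp (⟨·, hmS⟩) (⟨·, hmT⟩)
  have hm_right : ∀ j, (m ∈ S ∧ j ∈ S) ∨ (m ∈ T ∧ j ∈ T) :=
    fun j => (hcover j).imp (⟨hmS, ·⟩) (⟨hmT, ·⟩)
  refine eq_top_of_forall_transvection_mem fun i j hij c => ?_
  by_cases hblock : (i ∈ S ∧ j ∈ S) ∨ (i ∈ T ∧ j ∈ T)
  · exact hmem i j hij c hblock
  have him : i ≠ m := by rintro rfl; exact hblock (hm_right j)
  have hmj : m ≠ j := by rintro rfl; exact hblock (hm_left i)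
  have hfst := hmem i m him c (hm_left i)
  have hsnd := hmem m j hmj 1 (hm_right j)
  rw [← mul_one c, ← commutator_transvection_transvection him hmj hij, commutatorElement_def]
  exact H.mul_mem (H.mul_mem (H.mul_mem hfst hsnd) (H.inv_mem hfst)) (H.inv_mem hsnd)

end Generation

section Basis

variable {ι R M : Type*} [Fintype ι] [DecidableEq ι] [CommRing R] [AddCommGroup M] [Module R M]

noncomputable def toLinearEquiv (b : Module.Basis ι R M) :
    SpecialLinearGroup ι R →* M ≃ₗ[R] M where
  toFun A := LinearEquiv.ofLinearMap (toLin b b A) (toLin b b ↑A⁻¹)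
    (by rw [← toLin_mul, ← coe_mul, mul_inv_cancel, coe_one, toLin_one])
    (by rw [← toLin_mul, ← coe_mul, inv_mul_cancel, coe_one, toLin_one])
  map_one' := LinearEquiv.toLinearMap_injective (toLin_one b)
  map_mul' A B := LinearEquiv.toLinearMap_injective (toLin_mul b b b A B)

variable (b : Module.Basis ι R M)

@[simp]
theorem coe_toLinearEquiv (A : SpecialLinearGroup ι R) :
    (toLinearEquiv b A : M →ₗ[R] M) = toLin b b A := rfl

theorem det_toLinearEquiv (A : SpecialLinearGroup ι R) :
    LinearMap.det (toLinearEquiv b A : M →ₗ[R] M) = 1 := by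
  rw [coe_toLinearEquiv, LinearMap.det_toLin, A.2]

theorem exists_toLinearEquiv_eq (g : M ≃ₗ[R] M) (hg : LinearMap.det (g : M →ₗ[R] M) = 1) :
    ∃ A, toLinearEquiv b A = g :=
  ⟨⟨LinearMap.toMatrix b b g, by rwa [LinearMap.det_toMatrix]⟩,
    LinearEquiv.toLinearMap_injective (toLin_toMatrix b b g)⟩

theorem toLinearEquiv_transvection_apply {i j : ι} (hij : i ≠ j) (c : R) (x : M) :
    toLinearEquiv b (transvection hij c) x = x + (c * b.repr x j) • b i := by
  change toLin b b (transvection hij c : Matrix ι ι R) x = _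
  rw [transvection_coe, map_add, toLin_one, LinearMap.add_apply, LinearMap.id_apply,
    toLin_apply, single_mulVec, Finset.sum_eq_single i (fun k _ hk => by simp [hk]) (by simp)]
  simp

end Basis

section Blocks

variable {R M κ : Type*} [CommRing R] [AddCommGroup M] [Module R M] [Fintype κ] [DecidableEq κ]
  {A : κ → Submodule R M} (hA : DirectSum.IsInternal A) {α : κ → Type*} [∀ k, Fintype (α k)]
  [∀ k, DecidableEq (α k)] (v : ∀ k, Module.Basis (α k) R (A k))

theorem toLinearEquiv_transvection_mem_of_block {H : Subgroup (M ≃ₗ[R] M)}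
    {W : Submodule R M} {k : κ}
    (hH : ∀ g : M ≃ₗ[R] M, LinearMap.det (g : M →ₗ[R] M) = 1 →
      (∀ x ∈ W, g x ∈ W) → (∀ x ∈ A k, g x = x) → g ∈ H)
    (hW : ∀ l ≠ k, A l ≤ W) {i j : Σ k, α k} (hij : i ≠ j) (hi : i.1 ≠ k) (hj : j.1 ≠ k)
    (c : R) : toLinearEquiv (hA.collectedBasis v) (transvection hij c) ∈ H := by
  refine hH _ (det_toLinearEquiv _ _) (fun x hx => ?_) (fun x hx => ?_) <;>
    rw [toLinearEquiv_transvection_apply]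
  · exact W.add_mem hx (W.smul_mem _ (hW _ hi (hA.collectedBasis_mem v i)))
  · rw [hA.collectedBasis_repr_of_mem_ne v (Ne.symm hj) hx, mul_zero, zero_smul, add_zero]

end Blocks

end Matrix.SpecialLinearGroup

open Matrix.SpecialLinearGroup

theorem stmt_0_general (F : Type*) [Field F]
    (V : Type*) [AddCommGroup V] [Module F V] [FiniteDimensional F V]
    (V₁ V₂ V₃ : Submodule F V)
    (h2 : V₂ ≠ ⊥)
    (hsup : V₁ ⊔ V₂ ⊔ V₃ = ⊤)
    (hind1 : V₁ ⊓ (V₂ ⊔ V₃) = ⊥) (hind2 : V₂ ⊓ (V₁ ⊔ V₃) = ⊥)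
    (hind3 : V₃ ⊓ (V₁ ⊔ V₂) = ⊥)
    (H : Subgroup (V ≃ₗ[F] V))
    (hL : ∀ g : V ≃ₗ[F] V, LinearMap.det (g : V →ₗ[F] V) = 1 →
      (∀ x ∈ V₁ ⊔ V₂, g x ∈ V₁ ⊔ V₂) → (∀ x ∈ V₃, g x = x) → g ∈ H)
    (hR : ∀ g : V ≃ₗ[F] V, LinearMap.det (g : V →ₗ[F] V) = 1 →
      (∀ x ∈ V₂ ⊔ V₃, g x ∈ V₂ ⊔ V₃) → (∀ x ∈ V₁, g x = x) → g ∈ H) :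
    ∀ g : V ≃ₗ[F] V, LinearMap.det (g : V →ₗ[F] V) = 1 → g ∈ H := by
  have hA := DirectSum.isInternal_submodule_fin_three hsup hind1 hind2 hind3
  let v k := Module.finBasis F (![V₁, V₂, V₃] k)
  have : Nontrivial V₂ := Submodule.nontrivial_iff_ne_bot.2 h2
  have htop : H.comap (toLinearEquiv (hA.collectedBasis v)) = ⊤ := by
    refine eq_top_of_transvection_mem_of_cover (S := {p | p.1 ≠ 2}) (T := {p | p.1 ≠ 0})
      ?_ ?_ ?_ ?_
    · exact Set.eq_univ_of_forall fun p => (by decide : ∀ k : Fin 3, k ≠ 2 ∨ k ≠ 0) p.1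
    · exact ⟨⟨1, ⟨0, Module.finrank_pos (R := F) (M := V₂)⟩⟩,
        (by decide : (1 : Fin 3) ≠ 2), (by decide : (1 : Fin 3) ≠ 0)⟩
    · intro i hi j hj hij c
      refine toLinearEquiv_transvection_mem_of_block hA v hL (fun l hl => ?_) hij hi hj c
      fin_cases l
      exacts [le_sup_left, le_sup_right, absurd rfl hl]
    · intro i hi j hj hij c
      refine toLinearEquiv_transvection_mem_of_block hA v hR (fun l hl => ?_) hij hi hj c
      fin_cases l
      exacts [absurd rfl hl, le_sup_left, le_sup_right]
  intro g hg
  obtain ⟨M, rfl⟩ := exists_toLinearEquiv_eq (hA.collectedBasis v) g hg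
  exact Subgroup.mem_comap.1 (htop ▸ Subgroup.mem_top M)

/-- If `V = V₁ ⊕ V₂ ⊕ V₃` over a finite field of odd characteristic
with each `Vᵢ` nonzero, and `H ≤ SL(V)` contains `SL(V₁ ⊕ V₂)` and `SL(V₂ ⊕ V₃)`
(block automorphisms fixing the complementary summand), then `H = SL(V)`. -/
theorem stmt_0 (F : Type*) [Field F] [Fintype F] (hchar : ringChar F ≠ 2)
    (V : Type*) [AddCommGroup V] [Module F V] [FiniteDimensional F V]
    (V₁ V₂ V₃ : Submodule F V)
    (h1 : V₁ ≠ ⊥) (h2 : V₂ ≠ ⊥) (h3 : V₃ ≠ ⊥)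
    (hsup : V₁ ⊔ V₂ ⊔ V₃ = ⊤)
    (hind1 : V₁ ⊓ (V₂ ⊔ V₃) = ⊥) (hind2 : V₂ ⊓ (V₁ ⊔ V₃) = ⊥)
    (hind3 : V₃ ⊓ (V₁ ⊔ V₂) = ⊥)
    (H : Subgroup (V ≃ₗ[F] V))
    (hSL : ∀ g ∈ H, LinearMap.det (g : V →ₗ[F] V) = 1)
    (hL : ∀ g : V ≃ₗ[F] V, LinearMap.det (g : V →ₗ[F] V) = 1 →
      (∀ x ∈ V₁ ⊔ V₂, g x ∈ V₁ ⊔ V₂) → (∀ x ∈ V₃, g x = x) → g ∈ H)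
    (hR : ∀ g : V ≃ₗ[F] V, LinearMap.det (g : V →ₗ[F] V) = 1 →
      (∀ x ∈ V₂ ⊔ V₃, g x ∈ V₂ ⊔ V₃) → (∀ x ∈ V₁, g x = x) → g ∈ H) :
    ∀ g : V ≃ₗ[F] V, LinearMap.det (g : V →ₗ[F] V) = 1 → g ∈ H :=
  stmt_0_general F V V₁ V₂ V₃ h2 hsup hind1 hind2 hind3 H hL hR
end

section
/- Let F be a finite field of odd characteristic and V a finite-dimensional F-vector space with a nondegenerate symplectic form, decomposed as an orthogonal direct sum V = V₁ ⊕ V₂ ⊕ V₃ with each Vᵢ a nonzero nondegenerate subspace. If H ⊆ Sp(V) contains Sp(V₁ ⊕ V₂) and Sp(V₂ ⊕ V₃), then H = Sp(V). -/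
/-!
Every isometry of a nondegenerate alternating form is a product of symplectic transvections
`x ↦ x + c B(x, v) v`: moving a spanning set into place one vector at a time needs at most two
transvections per vector, with directions orthogonal to the vectors already placed. So it
suffices that `H` contains every transvection. Those along `V₁ ⊕ V₂` or `V₂ ⊕ V₃` are in `H`
by hypothesis. For `v = a + w` with `a ∈ V₁`, `0 ≠ w ∈ V₂ ⊕ V₃`, choose `0 ≠ b ∈ V₂` and
`k ∈ Sp(V₂ ⊕ V₃)` with `k b = w`; then `t_{a+w} = k t_{a+b} k⁻¹ ∈ H`.
-/

namespace LinearMap.BilinForm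

variable {F V : Type*} [Field F] [AddCommGroup V] [Module F V] (B : LinearMap.BilinForm F V)

def isometryGroup : Subgroup (V ≃ₗ[F] V) where
  carrier := {g | ∀ x y, B (g x) (g y) = B x y}
  mul_mem' {g h} hg hh x y := (hg (h x) (h y)).trans (hh x y)
  one_mem' _ _ := rfl
  inv_mem' {g} hg x y := by
    simpa using (hg (g.symm x) (g.symm y)).symm

theorem mem_isometryGroup {g : V ≃ₗ[F] V} :
    g ∈ B.isometryGroup ↔ ∀ x y, B (g x) (g y) = B x y :=
  Iff.rfl

variable {B}

theorem disjoint_sup_orthogonal (hB : B.IsAlt) {W₁ W₂ : Submodule F V}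
    (h₁₂ : W₁ ≤ B.orthogonal W₂) (h₁ : Disjoint W₁ (B.orthogonal W₁))
    (h₂ : Disjoint W₂ (B.orthogonal W₂)) :
    Disjoint (W₁ ⊔ W₂) (B.orthogonal (W₁ ⊔ W₂)) := by
  rw [Submodule.disjoint_def] at h₁ h₂ ⊢
  intro x hx hxo
  obtain ⟨x₁, hx₁, x₂, hx₂, rfl⟩ := Submodule.mem_sup.1 hx
  have hx₁₂ : ∀ n ∈ W₂, B n x₁ = 0 := fun n hn => h₁₂ hx₁ n hn
  have hx₂₁ : ∀ n ∈ W₁, B n x₂ = 0 := fun n hn => hB.eq_iff.1 (h₁₂ hn x₂ hx₂)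
  have e₁ : x₁ = 0 := h₁ x₁ hx₁ fun n hn => by
    simpa [hx₂₁ n hn] using hxo n (Submodule.mem_sup_left hn)
  have e₂ : x₂ = 0 := h₂ x₂ hx₂ fun n hn => by
    simpa [hx₁₂ n hn] using hxo n (Submodule.mem_sup_right hn)
  rw [e₁, e₂, add_zero]

variable (hB : B.IsAlt)

noncomputable def symplecticTransvection (v : V) (c : F) : V ≃ₗ[F] V :=
  LinearEquiv.transvection (f := c • B.flip v) (v := v) (by simp [hB.self_eq_zero])

theorem symplecticTransvection_apply (v : V) (c : F) (x : V) :
    symplecticTransvection hB v c x = x + (c * B x v) • v :=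
  rfl

theorem symplecticTransvection_apply_of_eq_zero {v x : V} (c : F) (h : B x v = 0) :
    symplecticTransvection hB v c x = x := by
  simp [symplecticTransvection_apply, h]

theorem symplecticTransvection_mem_isometryGroup (v : V) (c : F) :
    symplecticTransvection hB v c ∈ B.isometryGroup := by
  intro x y
  simp only [symplecticTransvection_apply, map_add, map_smul, LinearMap.add_apply,
    LinearMap.smul_apply, smul_eq_mul, hB.self_eq_zero, mul_zero, add_zero]
  rw [← LinearMap.IsAlt.neg hB y v]
  ring

theorem conj_symplecticTransvection {g : V ≃ₗ[F] V} (hg : g ∈ B.isometryGroup) (v : V) (c : F) :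
    g * symplecticTransvection hB v c * g⁻¹ = symplecticTransvection hB (g v) c := by
  ext x
  have hx : B (g.symm x) v = B x (g v) := by
    simpa using (hg (g.symm x) v).symm
  simp [LinearEquiv.mul_apply, symplecticTransvection_apply, hx]

theorem symplecticTransvection_sub_apply {u w : V} (h : B u w ≠ 0) :
    symplecticTransvection hB (w - u) (B u w)⁻¹ u = w := by
  rw [symplecticTransvection_apply, map_sub, hB.self_eq_zero, sub_zero, inv_mul_cancel₀ h,
    one_smul, add_sub_cancel]

def transvectionGroup (S : Submodule F V) : Subgroup (V ≃ₗ[F] V) :=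
  Subgroup.closure {e | ∃ v ∈ S, ∃ c, symplecticTransvection hB v c = e}

theorem symplecticTransvection_mem_transvectionGroup {S : Submodule F V} {v : V} (hv : v ∈ S)
    (c : F) : symplecticTransvection hB v c ∈ transvectionGroup hB S :=
  Subgroup.subset_closure ⟨v, hv, c, rfl⟩

theorem transvectionGroup_mono {S T : Submodule F V} (h : S ≤ T) :
    transvectionGroup hB S ≤ transvectionGroup hB T :=
  Subgroup.closure_mono fun _ ⟨v, hv, c, he⟩ => ⟨v, h hv, c, he⟩

theorem transvectionGroup_le_isometryGroup (S : Submodule F V) :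
    transvectionGroup hB S ≤ B.isometryGroup :=
  Subgroup.closure_le _ |>.2 fun _ ⟨v, _, c, he⟩ =>
    he ▸ symplecticTransvection_mem_isometryGroup hB v c

theorem apply_eq_self_of_mem_transvectionGroup {S : Submodule F V} {g : V ≃ₗ[F] V}
    (hg : g ∈ transvectionGroup hB S) {x : V} (hx : ∀ v ∈ S, B x v = 0) : g x = x := by
  suffices transvectionGroup hB S ≤ MulAction.stabilizer (V ≃ₗ[F] V) x from this hg
  refine Subgroup.closure_le _ |>.2 fun _ ⟨v, hv, c, he⟩ => ?_
  rw [← he, SetLike.mem_coe, MulAction.mem_stabilizer_iff, LinearEquiv.smul_def]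
  exact symplecticTransvection_apply_of_eq_zero hB c (hx v hv)

theorem transvectionGroup_le_of_forall {S W : Submodule F V} (hSW : S ≤ B.orthogonal W)
    {H : Subgroup (V ≃ₗ[F] V)}
    (hH : ∀ g : V ≃ₗ[F] V, (∀ x y, B (g x) (g y) = B x y) → (∀ x ∈ S, g x ∈ S) →
      (∀ x ∈ W, g x = x) → g ∈ H) :
    transvectionGroup hB S ≤ H := by
  refine Subgroup.closure_le _ |>.2 fun _ ⟨v, hv, c, he⟩ => he ▸ ?_
  refine hH _ (symplecticTransvection_mem_isometryGroup hB v c) (fun x hx => ?_) fun x hx => ?_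
  · rw [symplecticTransvection_apply]
    exact S.add_mem hx (S.smul_mem _ hv)
  · exact symplecticTransvection_apply_of_eq_zero hB c (hSW hv x hx)

theorem exists_mem_ne_zero_ne_zero_of_notMem_orthogonal {S : Submodule F V} {u w : V}
    (hu : u ∉ B.orthogonal S) (hw : w ∉ B.orthogonal S) :
    ∃ d ∈ S, B d u ≠ 0 ∧ B d w ≠ 0 := by
  simp only [mem_orthogonal_iff, not_forall] at hu hw
  obtain ⟨d₁, hd₁, hd₁u⟩ := hu
  obtain ⟨d₂, hd₂, hd₂w⟩ := hw
  by_cases hd₁w : B d₁ w = 0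
  · by_cases hd₂u : B d₂ u = 0
    · exact ⟨d₁ + d₂, S.add_mem hd₁ hd₂, by simpa [hd₂u], by simpa [hd₁w]⟩
    · exact ⟨d₂, hd₂, hd₂u, hd₂w⟩
  · exact ⟨d₁, hd₁, hd₁u, hd₁w⟩

theorem exists_mem_transvectionGroup_apply_eq {S : Submodule F V} {u w : V} (hwu : w - u ∈ S)
    (hu : u ∉ B.orthogonal S) (hw : w ∉ B.orthogonal S) :
    ∃ g ∈ transvectionGroup hB S, g u = w := by
  by_cases huw : B u w = 0
  · obtain ⟨d, hd, hdu, hdw⟩ := exists_mem_ne_zero_ne_zero_of_notMem_orthogonal hu hw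
    have hud : B u d ≠ 0 := fun h => hdu (hB.eq_iff.1 h)
    have hd_apply : symplecticTransvection hB d (B u d)⁻¹ u = u + d := by
      rw [symplecticTransvection_apply, inv_mul_cancel₀ hud, one_smul]
    have hdw' : B (u + d) w ≠ 0 := by simpa [huw] using hdw
    refine ⟨symplecticTransvection hB (w - (u + d)) (B (u + d) w)⁻¹ *
      symplecticTransvection hB d (B u d)⁻¹, mul_mem ?_ ?_, ?_⟩
    · refine symplecticTransvection_mem_transvectionGroup hB ?_ _
      rw [← sub_sub]
      exact S.sub_mem hwu hd
    · exact symplecticTransvection_mem_transvectionGroup hB hd _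
    · rw [LinearEquiv.mul_apply, hd_apply, symplecticTransvection_sub_apply hB hdw']
  · exact ⟨_, symplecticTransvection_mem_transvectionGroup hB hwu _,
      symplecticTransvection_sub_apply hB huw⟩

theorem exists_mem_transvectionGroup_forall_apply_eq [FiniteDimensional F V]
    (hnd : B.Nondegenerate) {g : V ≃ₗ[F] V} (hg : g ∈ B.isometryGroup) (s : Finset V) :
    ∃ h ∈ transvectionGroup hB ⊤, ∀ v ∈ s, h (g v) = v := by
  classical
  induction s using Finset.induction_on with
  | empty => exact ⟨1, one_mem _, by simp⟩
  | insert a s _ ih =>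
    obtain ⟨h, hT, hfix⟩ := ih
    set U := Submodule.span F (s : Set V)
    have hfixU : ∀ x ∈ U, h (g x) = x := fun x hx =>
      LinearMap.eqOn_span (f := (h * g).toLinearMap) (g := LinearMap.id) hfix hx
    simp only [Finset.forall_mem_insert]
    by_cases haU : a ∈ U
    · exact ⟨h, hT, hfixU a haU, hfix⟩
    have hhg : h * g ∈ B.isometryGroup :=
      mul_mem (transvectionGroup_le_isometryGroup hB ⊤ hT) hg
    have huU : h (g a) ∉ U := fun hu =>
      haU (g.injective (h.injective (hfixU _ hu)) ▸ hu)
    have hau : a - h (g a) ∈ B.orthogonal U := fun n hn => by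
      rw [map_sub, ← hhg n a, LinearEquiv.mul_apply, LinearEquiv.mul_apply, hfixU n hn, sub_self]
    rw [← orthogonal_orthogonal hnd hB.isRefl U] at haU huU
    obtain ⟨k, hkT, hka⟩ := exists_mem_transvectionGroup_apply_eq hB hau huU haU
    refine ⟨k * h, mul_mem (transvectionGroup_mono hB le_top hkT) hT, hka, fun v hv => ?_⟩
    rw [LinearEquiv.mul_apply, hfix v hv]
    exact apply_eq_self_of_mem_transvectionGroup hB hkT fun d hd =>
      hd v (Submodule.subset_span hv)

theorem isometryGroup_le_transvectionGroup_top [FiniteDimensional F V] (hnd : B.Nondegenerate) :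
    B.isometryGroup ≤ transvectionGroup hB ⊤ := by
  intro g hg
  obtain ⟨s, hs⟩ := Module.Finite.fg_top (R := F) (M := V)
  obtain ⟨h, hT, hfix⟩ := exists_mem_transvectionGroup_forall_apply_eq hB hnd hg s
  have hhg : h * g = 1 := LinearEquiv.ext fun x =>
    LinearMap.eqOn_span (f := (h * g).toLinearMap) (g := LinearMap.id) hfix (hs ▸ trivial)
  rw [eq_inv_of_mul_eq_one_right hhg]
  exact inv_mem hT

theorem transvectionGroup_sup_sup_le {W₁ W₂ W₃ : Submodule F V} (hW₂ : W₂ ≠ ⊥)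
    (h₁ : W₂ ⊔ W₃ ≤ B.orthogonal W₁) (hnd : Disjoint (W₂ ⊔ W₃) (B.orthogonal (W₂ ⊔ W₃)))
    {H : Subgroup (V ≃ₗ[F] V)} (h₁₂ : transvectionGroup hB (W₁ ⊔ W₂) ≤ H)
    (h₂₃ : transvectionGroup hB (W₂ ⊔ W₃) ≤ H) :
    transvectionGroup hB (W₁ ⊔ W₂ ⊔ W₃) ≤ H := by
  refine Subgroup.closure_le _ |>.2 fun _ ⟨v, hv, c, he⟩ => he ▸ ?_
  rw [sup_assoc] at hv
  obtain ⟨a, ha, w, hw, rfl⟩ := Submodule.mem_sup.1 hv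
  by_cases hw0 : w = 0
  · rw [hw0, add_zero]
    exact h₁₂ (symplecticTransvection_mem_transvectionGroup hB (Submodule.mem_sup_left ha) c)
  have hnotMem : ∀ x ∈ W₂ ⊔ W₃, x ≠ 0 → x ∉ B.orthogonal (W₂ ⊔ W₃) := fun x hx hx0 hxo =>
    hx0 (Submodule.disjoint_def.1 hnd x hx hxo)
  obtain ⟨b, hb, hb0⟩ := Submodule.exists_mem_ne_zero_of_ne_bot hW₂
  obtain ⟨k, hkT, hkb⟩ := exists_mem_transvectionGroup_apply_eq hB
    (Submodule.sub_mem _ hw (Submodule.mem_sup_left hb))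
    (hnotMem b (Submodule.mem_sup_left hb) hb0) (hnotMem w hw hw0)
  have hka : k a = a :=
    apply_eq_self_of_mem_transvectionGroup hB hkT fun d hd => h₁ hd a ha
  have hkab : k (a + b) = a + w := by rw [map_add, hka, hkb]
  rw [← hkab, ← conj_symplecticTransvection hB (transvectionGroup_le_isometryGroup hB _ hkT)]
  have hab : a + b ∈ W₁ ⊔ W₂ := Submodule.add_mem_sup ha hb
  exact mul_mem (mul_mem (h₂₃ hkT)
    (h₁₂ (symplecticTransvection_mem_transvectionGroup hB hab c))) (inv_mem (h₂₃ hkT))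

end LinearMap.BilinForm

open LinearMap.BilinForm

theorem stmt_1_general (F : Type*) [Field F]
    (V : Type*) [AddCommGroup V] [Module F V] [FiniteDimensional F V]
    (B : LinearMap.BilinForm F V) (halt : B.IsAlt) (hnd : B.Nondegenerate)
    (V₁ V₂ V₃ : Submodule F V)
    (h2 : V₂ ≠ ⊥)
    (hsup : V₁ ⊔ V₂ ⊔ V₃ = ⊤)
    (horth12 : ∀ x ∈ V₁, ∀ y ∈ V₂, B x y = 0)
    (horth13 : ∀ x ∈ V₁, ∀ y ∈ V₃, B x y = 0)
    (horth23 : ∀ x ∈ V₂, ∀ y ∈ V₃, B x y = 0)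
    (hndi : ∀ W ∈ ({V₁, V₂, V₃} : Set (Submodule F V)),
      ∀ x ∈ W, (∀ y ∈ W, B x y = 0) → x = 0)
    (H : Subgroup (V ≃ₗ[F] V))
    (hL : ∀ g : V ≃ₗ[F] V, (∀ x y : V, B (g x) (g y) = B x y) →
      (∀ x ∈ V₁ ⊔ V₂, g x ∈ V₁ ⊔ V₂) → (∀ x ∈ V₃, g x = x) → g ∈ H)
    (hR : ∀ g : V ≃ₗ[F] V, (∀ x y : V, B (g x) (g y) = B x y) →
      (∀ x ∈ V₂ ⊔ V₃, g x ∈ V₂ ⊔ V₃) → (∀ x ∈ V₁, g x = x) → g ∈ H) :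
    ∀ g : V ≃ₗ[F] V, (∀ x y : V, B (g x) (g y) = B x y) → g ∈ H := by
  have hdisj : ∀ W ∈ ({V₁, V₂, V₃} : Set (Submodule F V)), Disjoint W (B.orthogonal W) :=
    fun W hW => Submodule.disjoint_def.2 fun x hx hxo =>
      hndi W hW x hx fun y hy => halt.eq_iff.1 (hxo y hy)
  have h₂₃₁ : V₂ ⊔ V₃ ≤ B.orthogonal V₁ :=
    sup_le (fun y hy x hx => horth12 x hx y hy) fun y hy x hx => horth13 x hx y hy
  have h₁₂₃ : V₁ ⊔ V₂ ≤ B.orthogonal V₃ :=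
    sup_le (fun y hy x hx => halt.eq_iff.1 (horth13 y hy x hx))
      fun y hy x hx => halt.eq_iff.1 (horth23 y hy x hx)
  have hnd₂₃ : Disjoint (V₂ ⊔ V₃) (B.orthogonal (V₂ ⊔ V₃)) :=
    disjoint_sup_orthogonal halt (W₁ := V₂) (fun y hy x hx => halt.eq_iff.1 (horth23 y hy x hx))
      (hdisj V₂ (by simp)) (hdisj V₃ (by simp))
  have hT := transvectionGroup_sup_sup_le halt h2 h₂₃₁ hnd₂₃
    (transvectionGroup_le_of_forall halt h₁₂₃ hL) (transvectionGroup_le_of_forall halt h₂₃₁ hR)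
  rw [hsup] at hT
  exact fun g hg =>
    hT (isometryGroup_le_transvectionGroup_top halt hnd ((mem_isometryGroup B).2 hg))

/-- symplectic analogue. `V = V₁ ⟂ V₂ ⟂ V₃` nondegenerate symplectic
over a finite field of odd characteristic; if `H ⊆ Sp(V)` contains `Sp(V₁ ⊕ V₂)`
and `Sp(V₂ ⊕ V₃)`, then `H = Sp(V)`. -/
theorem stmt_1 (F : Type*) [Field F] [Fintype F] (hchar : ringChar F ≠ 2)
    (V : Type*) [AddCommGroup V] [Module F V] [FiniteDimensional F V]
    (B : LinearMap.BilinForm F V) (halt : B.IsAlt) (hnd : B.Nondegenerate)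
    (V₁ V₂ V₃ : Submodule F V)
    (h1 : V₁ ≠ ⊥) (h2 : V₂ ≠ ⊥) (h3 : V₃ ≠ ⊥)
    (hsup : V₁ ⊔ V₂ ⊔ V₃ = ⊤)
    (hind1 : V₁ ⊓ (V₂ ⊔ V₃) = ⊥) (hind2 : V₂ ⊓ (V₁ ⊔ V₃) = ⊥)
    (hind3 : V₃ ⊓ (V₁ ⊔ V₂) = ⊥)
    (horth12 : ∀ x ∈ V₁, ∀ y ∈ V₂, B x y = 0)
    (horth13 : ∀ x ∈ V₁, ∀ y ∈ V₃, B x y = 0)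
    (horth23 : ∀ x ∈ V₂, ∀ y ∈ V₃, B x y = 0)
    (hndi : ∀ W ∈ ({V₁, V₂, V₃} : Set (Submodule F V)),
      ∀ x ∈ W, (∀ y ∈ W, B x y = 0) → x = 0)
    (H : Subgroup (V ≃ₗ[F] V))
    (hSp : ∀ g ∈ H, ∀ x y : V, B (g x) (g y) = B x y)
    (hL : ∀ g : V ≃ₗ[F] V, (∀ x y : V, B (g x) (g y) = B x y) →
      (∀ x ∈ V₁ ⊔ V₂, g x ∈ V₁ ⊔ V₂) → (∀ x ∈ V₃, g x = x) → g ∈ H)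
    (hR : ∀ g : V ≃ₗ[F] V, (∀ x y : V, B (g x) (g y) = B x y) →
      (∀ x ∈ V₂ ⊔ V₃, g x ∈ V₂ ⊔ V₃) → (∀ x ∈ V₁, g x = x) → g ∈ H) :
    ∀ g : V ≃ₗ[F] V, (∀ x y : V, B (g x) (g y) = B x y) → g ∈ H :=
  stmt_1_general F V B halt hnd V₁ V₂ V₃ h2 hsup horth12 horth13 horth23 hndi H hL hR
end

section
/- Let g ≥ 4 and let (r, s) be a trielliptic signature for g (i.e., r + s = g, 3r ≥ g - 1, 3r ≤ 2g + 1, and similarly for s). Then at least one of the following degenerations is possible: (i) r ≥ 2 and (r-2, s) is a trielliptic signature for g - 2; (ii) s ≥ 2 and (r, s-2) is a trielliptic signature for g - 2; (iii) r ≥ 1, s ≥ 1, and (r-1, s-1) is a trielliptic signature for g - 2. -/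
/-- A trielliptic signature for genus `g`: `r + s = g` and
`(g-1)/3 ≤ r, s ≤ (2g+1)/3`. -/
def IsTriellipticSignature (g r s : ℤ) : Prop :=
  r + s = g ∧ g - 1 ≤ 3 * r ∧ 3 * r ≤ 2 * g + 1 ∧ g - 1 ≤ 3 * s ∧ 3 * s ≤ 2 * g + 1

/-- every trielliptic signature for `g ≥ 4` degenerates to one
for `g - 2` by one of the three listed moves. -/
theorem stmt_13 (g r s : ℤ) (hg : 4 ≤ g) (h : IsTriellipticSignature g r s) :
    (2 ≤ r ∧ IsTriellipticSignature (g - 2) (r - 2) s) ∨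
    (2 ≤ s ∧ IsTriellipticSignature (g - 2) r (s - 2)) ∨
    (1 ≤ r ∧ 1 ≤ s ∧ IsTriellipticSignature (g - 2) (r - 1) (s - 1)) := by
  obtain ⟨h1, h2, h3, h4, h5⟩ := h
  unfold IsTriellipticSignature
  rcases le_or_gt (g + 3) (3 * r) with hr | hr
  · left; constructor <;> omega
  · rcases le_or_gt (g + 3) (3 * s) with hs | hs
    · right; left; constructor <;> omega
    · right; right; refine ⟨by omega, by omega, ?_⟩; omega
end

section
/- Let γ: {1, ..., r} → (Z/3)× be a class vector with Σᵢ γ(i) = 0 in Z/3 and genus g(γ) = r - 2 ≥ 4. Then there exist class vectors γ₁, γ₂, γ₃ with Σ γⱼ(i) = 0 for each j, with g(γ₁) = g(γ₃) = 1 (i.e., γ₁, γ₃ ∈ {(1,1,1), (2,2,2)}), g(γ₂) = g(γ) - 2, such that the concatenation conditions hold: γ₂(1) = -γ₁(3), γ₂(r-2) = -γ₃(1) in Z/3, and the multiset obtained by concatenating γ₁ (dropping its last entry), γ₂ (dropping its first and last entries, with appropriate matching), and γ₃ recovers the multiset of values of γ. -/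
lemma card_interval (n l u : ℕ) (hu : u < n) :
    (Finset.univ.filter (fun i : Fin n => l ≤ i.val ∧ i.val ≤ u)).card = u + 1 - l := by
  rw [show (Finset.univ.filter (fun i : Fin n => l ≤ i.val ∧ i.val ≤ u)) =
    (Finset.Icc l u).attachFin (fun m hm => lt_of_le_of_lt (Finset.mem_Icc.mp hm).2 hu) by
      ext i; simp [Finset.mem_attachFin]]
  rw [Finset.card_attachFin, Nat.card_Icc]

lemma master (r : ℕ) (hr : 6 ≤ r) (γ : Fin r → ZMod 3)
    (hval : ∀ i, γ i ≠ 0) (hsum : ∑ i, γ i = 0)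
    (c₁ c₃ : ZMod 3) (h₁ : c₁ = 1 ∨ c₁ = 2) (h₃ : c₃ = 1 ∨ c₃ = 2)
    (a' b' : ℕ) (hab : a' + b' = r - 4)
    (hc1 : (Finset.univ.filter (fun i => γ i = 1)).card
        = a' + (if c₁ = 1 then 2 else 0) + (if c₃ = 1 then 2 else 0))
    (hc2 : (Finset.univ.filter (fun i => γ i = 2)).card
        = b' + (if c₁ = 2 then 2 else 0) + (if c₃ = 2 then 2 else 0)) :
    ∃ (γ₁ γ₃ : Fin 3 → ZMod 3) (γ₂ : Fin (r - 2) → ZMod 3),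
      (∀ i, γ₁ i ≠ 0) ∧ (∀ i, γ₂ i ≠ 0) ∧ (∀ i, γ₃ i ≠ 0) ∧
      (∑ i, γ₁ i = 0) ∧ (∑ i, γ₂ i = 0) ∧ (∑ i, γ₃ i = 0) ∧
      ((γ₁ = fun _ => 1) ∨ (γ₁ = fun _ => 2)) ∧
      ((γ₃ = fun _ => 1) ∨ (γ₃ = fun _ => 2)) ∧
      γ₂ ⟨0, by omega⟩ = -γ₁ 2 ∧
      γ₂ ⟨r - 3, by omega⟩ = -γ₃ 0 ∧
      Finset.univ.val.map γ =
        ({γ₁ 0, γ₁ 1} : Multiset (ZMod 3)) +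
          ((Finset.univ.filter
              (fun i : Fin (r - 2) => i.val ≠ 0 ∧ i.val ≠ r - 3)).val.map γ₂) +
          ({γ₃ 1, γ₃ 2} : Multiset (ZMod 3)) := by
  set γ₂ : Fin (r-2) → ZMod 3 := fun i =>
    if i.val = 0 then -c₁ else if i.val = r-3 then -c₃ else if i.val ≤ a' then 1 else 2
    with hγ₂
  have hc₁0 : c₁ ≠ 0 := by rcases h₁ with h|h <;> rw [h] <;> decide
  have hc₃0 : c₃ ≠ 0 := by rcases h₃ with h|h <;> rw [h] <;> decide
  have hval2 : ∀ i, γ i = 1 ∨ γ i = 2 := fun i =>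
    (by decide : ∀ x : ZMod 3, x ≠ 0 → x = 1 ∨ x = 2) (γ i) (hval i)
  -- the key multiset equality
  have hmult : Finset.univ.val.map γ =
        ({c₁, c₁} : Multiset (ZMod 3)) +
          ((Finset.univ.filter
              (fun i : Fin (r - 2) => i.val ≠ 0 ∧ i.val ≠ r - 3)).val.map γ₂) +
          ({c₃, c₃} : Multiset (ZMod 3)) := by
    ext x
    have hL : ∀ y : ZMod 3, (Finset.univ.val.map γ).count y
        = (Finset.univ.filter (fun i => γ i = y)).card := by
      intro y
      rw [Multiset.count_map, ← Finset.filter_val]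
      show (Finset.filter _ _).card = _
      congr 1
      ext i; simp [eq_comm]
    have hR : ∀ y : ZMod 3,
        (((Finset.univ.filter
          (fun i : Fin (r - 2) => i.val ≠ 0 ∧ i.val ≠ r - 3)).val.map γ₂)).count y
        = (Finset.univ.filter
            (fun i : Fin (r-2) => (i.val ≠ 0 ∧ i.val ≠ r - 3) ∧ γ₂ i = y)).card := by
      intro y
      rw [Multiset.count_map, ← Finset.filter_val, Finset.filter_filter]
      show (Finset.filter _ _).card = _
      congr 1
      ext i; simp [eq_comm, and_assoc]
    -- counts of the interior
    have hI1 : (Finset.univ.filter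
            (fun i : Fin (r-2) => (i.val ≠ 0 ∧ i.val ≠ r - 3) ∧ γ₂ i = 1)).card = a' := by
      have : (Finset.univ.filter
            (fun i : Fin (r-2) => (i.val ≠ 0 ∧ i.val ≠ r - 3) ∧ γ₂ i = 1))
          = (Finset.univ.filter (fun i : Fin (r-2) => 1 ≤ i.val ∧ i.val ≤ a')) := by
        ext i
        simp only [Finset.mem_filter, Finset.mem_univ, true_and, hγ₂]
        constructor
        · rintro ⟨⟨h0, h3⟩, hv⟩
          rw [if_neg h0, if_neg h3] at hv
          by_cases h : i.val ≤ a'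
          · exact ⟨by omega, h⟩
          · rw [if_neg h] at hv; exact absurd hv (by decide)
        · rintro ⟨hl, hu⟩
          have h0 : i.val ≠ 0 := by omega
          have h3 : i.val ≠ r - 3 := by omega
          rw [if_neg h0, if_neg h3, if_pos hu]
          exact ⟨⟨h0, h3⟩, rfl⟩
      rw [this, card_interval _ _ _ (by omega)]
      omega
    have hI2 : (Finset.univ.filter
            (fun i : Fin (r-2) => (i.val ≠ 0 ∧ i.val ≠ r - 3) ∧ γ₂ i = 2)).card = b' := by
      have : (Finset.univ.filter
            (fun i : Fin (r-2) => (i.val ≠ 0 ∧ i.val ≠ r - 3) ∧ γ₂ i = 2))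
          = (Finset.univ.filter (fun i : Fin (r-2) => a'+1 ≤ i.val ∧ i.val ≤ r-4)) := by
        ext i
        simp only [Finset.mem_filter, Finset.mem_univ, true_and, hγ₂]
        constructor
        · rintro ⟨⟨h0, h3⟩, hv⟩
          rw [if_neg h0, if_neg h3] at hv
          by_cases h : i.val ≤ a'
          · rw [if_pos h] at hv; exact absurd hv (by decide)
          · have := i.isLt; omega
        · rintro ⟨hl, hu⟩
          have h0 : i.val ≠ 0 := by omega
          have h3 : i.val ≠ r - 3 := by omega
          rw [if_neg h0, if_neg h3, if_neg (by omega)]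
          exact ⟨⟨h0, h3⟩, rfl⟩
      rw [this, card_interval _ _ _ (by omega)]
      omega
    have hI0 : (Finset.univ.filter
            (fun i : Fin (r-2) => (i.val ≠ 0 ∧ i.val ≠ r - 3) ∧ γ₂ i = 0)).card = 0 := by
      rw [Finset.card_eq_zero, Finset.filter_eq_empty_iff]
      rintro i -
      rintro ⟨⟨h0, h3⟩, hv⟩
      rw [hγ₂] at hv
      simp only [if_neg h0, if_neg h3] at hv
      split at hv <;> exact absurd hv (by decide)
    have hL0 : (Finset.univ.filter (fun i => γ i = (0:ZMod 3))).card = 0 := by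
      rw [Finset.card_eq_zero, Finset.filter_eq_empty_iff]
      exact fun i _ => hval i
    simp only [Multiset.count_add, hL, hR]
    -- now case on x
    rcases (by decide : ∀ x : ZMod 3, x = 0 ∨ x = 1 ∨ x = 2) x with hx|hx|hx <;> subst hx
    · rw [hL0, hI0]
      rcases h₁ with h|h <;> rcases h₃ with h'|h' <;> subst h <;> subst h' <;>
        simp (config := { decide := true }) [Multiset.count_cons, Multiset.count_singleton]
    · rw [hc1, hI1]
      rcases h₁ with h|h <;> rcases h₃ with h'|h' <;> subst h <;> subst h' <;>
        simp (config := { decide := true }) [Multiset.count_cons, Multiset.count_singleton] <;> omega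
    · rw [hc2, hI2]
      rcases h₁ with h|h <;> rcases h₃ with h'|h' <;> subst h <;> subst h' <;>
        simp (config := { decide := true }) [Multiset.count_cons, Multiset.count_singleton] <;> omega
  refine ⟨fun _ => c₁, fun _ => c₃, γ₂, fun _ => hc₁0, ?_, fun _ => hc₃0, ?_, ?_, ?_, ?_, ?_, ?_, ?_, hmult⟩
  · intro i
    rw [hγ₂]
    dsimp only
    split
    · exact fun h => hc₁0 (neg_eq_zero.mp h)
    split
    · exact fun h => hc₃0 (neg_eq_zero.mp h)
    split <;> decide
  · rcases h₁ with h|h <;> subst h <;> decide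
  · -- sum of γ₂
    have h3 : (3 : ZMod 3) = 0 := rfl
    have hP := Finset.sum_filter_add_sum_filter_not Finset.univ
      (fun i : Fin (r-2) => i.val ≠ 0 ∧ i.val ≠ r - 3) γ₂
    have hco : Finset.univ.filter (fun i : Fin (r-2) => ¬(i.val ≠ 0 ∧ i.val ≠ r - 3))
        = {(⟨0, by omega⟩ : Fin (r-2)), ⟨r-3, by omega⟩} := by
      ext i
      simp only [Finset.mem_filter, Finset.mem_univ, true_and, Finset.mem_insert,
        Finset.mem_singleton, Fin.ext_iff]
      omega
    have hne : (⟨0, by omega⟩ : Fin (r-2)) ≠ ⟨r-3, by omega⟩ := by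
      simp only [ne_eq, Fin.ext_iff]; omega
    rw [hco, Finset.sum_pair hne] at hP
    have h0 : γ₂ ⟨0, by omega⟩ = -c₁ := by simp [hγ₂]
    have hr3 : γ₂ ⟨r-3, by omega⟩ = -c₃ := by
      simp [hγ₂, show r - 3 ≠ 0 by omega]
    have hmsum := congrArg Multiset.sum hmult
    rw [Multiset.sum_add, Multiset.sum_add] at hmsum
    have hLsum : (Multiset.map γ Finset.univ.val).sum = ∑ i, γ i := rfl
    have hIsum : (Multiset.map γ₂ (Finset.univ.filter
        (fun i : Fin (r - 2) => i.val ≠ 0 ∧ i.val ≠ r - 3)).val).sum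
        = ∑ i ∈ Finset.univ.filter (fun i : Fin (r-2) => i.val ≠ 0 ∧ i.val ≠ r - 3), γ₂ i := rfl
    rw [hLsum, hsum, hIsum] at hmsum
    simp only [Multiset.insert_eq_cons, Multiset.sum_cons, Multiset.sum_singleton] at hmsum
    rw [← hP, h0, hr3]
    linear_combination -hmsum - (c₁ + c₃) * h3
  · rcases h₃ with h|h <;> subst h <;> decide
  · rcases h₁ with h|h <;> subst h <;> [left; right] <;> rfl
  · rcases h₃ with h|h <;> subst h <;> [left; right] <;> rfl
  · simp [hγ₂]
  · simp [hγ₂, show r - 3 ≠ 0 by omega]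


/-- every class vector `γ : {1,…,r} → (ℤ/3)ˣ` with `Σγ(i) = 0`
and genus `g(γ) = r - 2 ≥ 4` degenerates to `Δ_{1,1}`: there are class vectors
`γ₁, γ₃` of genus 1 (hence constant of value `1` or `2`) and `γ₂` of genus
`g(γ) - 2` (length `r - 2`) satisfying the gluing conditions
`γ₂(1) = -γ₁(3)`, `γ₂(r-2) = -γ₃(1)`, whose interior entries together with the
outer entries of `γ₁, γ₃` recover the multiset of values of `γ`. -/
theorem stmt_14 (r : ℕ) (hr : 6 ≤ r) (γ : Fin r → ZMod 3)
    (hval : ∀ i, γ i ≠ 0) (hsum : ∑ i, γ i = 0) :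
    ∃ (γ₁ γ₃ : Fin 3 → ZMod 3) (γ₂ : Fin (r - 2) → ZMod 3),
      (∀ i, γ₁ i ≠ 0) ∧ (∀ i, γ₂ i ≠ 0) ∧ (∀ i, γ₃ i ≠ 0) ∧
      (∑ i, γ₁ i = 0) ∧ (∑ i, γ₂ i = 0) ∧ (∑ i, γ₃ i = 0) ∧
      ((γ₁ = fun _ => 1) ∨ (γ₁ = fun _ => 2)) ∧
      ((γ₃ = fun _ => 1) ∨ (γ₃ = fun _ => 2)) ∧
      γ₂ ⟨0, by omega⟩ = -γ₁ 2 ∧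
      γ₂ ⟨r - 3, by omega⟩ = -γ₃ 0 ∧
      Finset.univ.val.map γ =
        ({γ₁ 0, γ₁ 1} : Multiset (ZMod 3)) +
          ((Finset.univ.filter
              (fun i : Fin (r - 2) => i.val ≠ 0 ∧ i.val ≠ r - 3)).val.map γ₂) +
          ({γ₃ 1, γ₃ 2} : Multiset (ZMod 3)) := by
  have hval2 : ∀ i, γ i = 1 ∨ γ i = 2 := fun i =>
    (by decide : ∀ x : ZMod 3, x ≠ 0 → x = 1 ∨ x = 2) (γ i) (hval i)
  have hab : (Finset.univ.filter (fun i => γ i = 1)).card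
      + (Finset.univ.filter (fun i => γ i = 2)).card = r := by
    have h := Finset.card_filter_add_card_filter_not
      (s := Finset.univ) (p := fun i : Fin r => γ i = 1)
    rw [show Finset.univ.filter (fun i : Fin r => ¬ γ i = 1)
        = Finset.univ.filter (fun i => γ i = 2) from by
      ext i
      simp only [Finset.mem_filter, Finset.mem_univ, true_and]
      rcases hval2 i with h|h <;> simp (config := { decide := true }) [h]] at h
    simpa using h
  rcases le_or_gt (Finset.univ.filter (fun i => γ i = 1)).card 1 with h1|h1
  · refine master r hr γ hval hsum 2 2 (Or.inr rfl) (Or.inr rfl)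
      ((Finset.univ.filter (fun i => γ i = 1)).card)
      ((Finset.univ.filter (fun i => γ i = 2)).card - 4) (by omega) ?_ ?_
    · split_ifs <;> first | omega | simp_all (config := { decide := true })
    · split_ifs <;> first | omega | simp_all (config := { decide := true })
  · rcases le_or_gt (Finset.univ.filter (fun i => γ i = 2)).card 1 with h2|h2
    · refine master r hr γ hval hsum 1 1 (Or.inl rfl) (Or.inl rfl)
        ((Finset.univ.filter (fun i => γ i = 1)).card - 4)
        ((Finset.univ.filter (fun i => γ i = 2)).card) (by omega) ?_ ?_
      · split_ifs <;> first | omega | simp_all (config := { decide := true })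
      · split_ifs <;> first | omega | simp_all (config := { decide := true })
    · refine master r hr γ hval hsum 1 2 (Or.inl rfl) (Or.inr rfl)
        ((Finset.univ.filter (fun i => γ i = 1)).card - 2)
        ((Finset.univ.filter (fun i => γ i = 2)).card - 2) (by omega) ?_ ?_
      · split_ifs <;> first | omega | simp_all (config := { decide := true })
      · split_ifs <;> first | omega | simp_all (config := { decide := true })
end
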